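/- Let F be a graph with s vertices and minimum degree δ ≥ 1. Then for all integers n ≥ m ≥ s - 1, wsat(K_n, F) ≤ (δ-1)(n-m) + wsat(K_m, F). -/

import Mathlib

open SimpleGraph Finset Filter

/-- `F` has a copy (an injective graph homomorphism image) in `G`. -/
def HasCopy {W V : Type*} (F : SimpleGraph W) (G : SimpleGraph V) : Prop :=
  ∃ f : W ↪ V, ∀ a b, F.Adj a b → G.Adj (f a) (f b)

/-- Adding the edge `xy` to `H` creates a new copy of `F` containing `xy`. -/
def NewCopyStep {W V : Type*} (F : SimpleGraph W) (H : SimpleGraph V) (x y : V) : Prop :=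
  ¬ H.Adj x y ∧
  ∃ f : W ↪ V, ∃ a b : W, F.Adj a b ∧ f a = x ∧ f b = y ∧
    ∀ c d, F.Adj c d → (H ⊔ SimpleGraph.fromEdgeSet {s(x, y)}).Adj (f c) (f d)

/-- The list `l` of edges can be added successively to `H`, each addition creating a
new copy of `F` containing the added edge. -/
def SatProcess {W V : Type*} (F : SimpleGraph W) : SimpleGraph V → List (V × V) → Prop
  | _, [] => True
  | H, e :: l => NewCopyStep F H e.1 e.2 ∧
      SatProcess F (H ⊔ SimpleGraph.fromEdgeSet {s(e.1, e.2)}) l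

/-- The graph obtained from `H` by adding all edges in the list `l`. -/
def addEdges {V : Type*} (H : SimpleGraph V) (l : List (V × V)) : SimpleGraph V :=
  H ⊔ SimpleGraph.fromEdgeSet {e | ∃ p ∈ l, e = s(p.1, p.2)}

/-- `H` is weakly `(G, F)`-saturated. -/
def WeaklySaturated {W V : Type*} (G : SimpleGraph V) (F : SimpleGraph W)
    (H : SimpleGraph V) : Prop :=
  H ≤ G ∧ ¬ HasCopy F H ∧ ∃ l : List (V × V), SatProcess F H l ∧ addEdges H l = G

/-- The weak saturation number `wsat(G, F)`. -/
noncomputable def wsat {W V : Type*} (G : SimpleGraph V) (F : SimpleGraph W) : ℕ :=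
  sInf {m | ∃ H, WeaklySaturated G F H ∧ H.edgeSet.ncard = m}


/-! Let `H` be weakly saturated on `n ≥ s - 1` vertices and add a new vertex `v` joined to a set
`D` of `δ - 1` old vertices. The new graph is `F`-free: a copy of `F` avoiding `v` would be a
copy in `H`, and `v` has degree `δ - 1 < δ`. Replaying the saturation process of `H` completes
the old vertices to a clique. After that every missing edge `vu` creates a copy of `F` through
`vu`: place a vertex of minimum degree at `v`, its `δ` neighbours onto `D ∪ {u}`, and the remaining
vertices anywhere among the `n ≥ s - 1` old ones. Hence `wsat(n + 1) ≤ wsat(n) + δ - 1`. -/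

open Relation

section SatStep

variable {W V : Type*}

lemma addEdges_nil (H : SimpleGraph V) : addEdges H [] = H := by
  simp [addEdges]

lemma addEdges_cons (H : SimpleGraph V) (p : V × V) (l : List (V × V)) :
    addEdges H (p :: l) = addEdges (H ⊔ edge p.1 p.2) l := by
  have : {e | ∃ q ∈ p :: l, e = s(q.1, q.2)} = {s(p.1, p.2)} ∪ {e | ∃ q ∈ l, e = s(q.1, q.2)} := by
    ext e; simp [or_and_right, exists_or, eq_comm]
  rw [addEdges, addEdges, this, fromEdgeSet_union, ← sup_assoc, edge]

def SatStep (F : SimpleGraph W) (H H' : SimpleGraph V) : Prop :=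
  ∃ x y, NewCopyStep F H x y ∧ H' = H ⊔ edge x y

lemma reflTransGen_satStep_addEdges {F : SimpleGraph W} :
    ∀ {H : SimpleGraph V} {l : List (V × V)}, SatProcess F H l →
      ReflTransGen (SatStep F) H (addEdges H l)
  | H, [], _ => by rw [addEdges_nil]
  | H, p :: l, ⟨hp, hl⟩ => by
    rw [addEdges_cons]
    exact .head ⟨p.1, p.2, hp, rfl⟩ (reflTransGen_satStep_addEdges hl)

lemma exists_satProcess_of_reflTransGen {F : SimpleGraph W} {H H' : SimpleGraph V}
    (h : ReflTransGen (SatStep F) H H') : ∃ l, SatProcess F H l ∧ addEdges H l = H' := by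
  induction h using ReflTransGen.head_induction_on with
  | refl => exact ⟨[], trivial, addEdges_nil H'⟩
  | head hstep _ ih =>
    obtain ⟨x, y, hxy, rfl⟩ := hstep
    obtain ⟨l, hl, rfl⟩ := ih
    exact ⟨(x, y) :: l, ⟨hxy, hl⟩, addEdges_cons _ _ _⟩

lemma weaklySaturated_iff {G H : SimpleGraph V} {F : SimpleGraph W} :
    WeaklySaturated G F H ↔ H ≤ G ∧ ¬ HasCopy F H ∧ ReflTransGen (SatStep F) H G := by
  refine and_congr_right fun _ => and_congr_right fun _ => ⟨?_, exists_satProcess_of_reflTransGen⟩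
  rintro ⟨l, hl, rfl⟩
  exact reflTransGen_satStep_addEdges hl

end SatStep

section AddVertex

variable {n : ℕ} {H : SimpleGraph (Fin n)} {S : Finset (Fin n)} {x y : Fin n}

def addVertex (H : SimpleGraph (Fin n)) (S : Finset (Fin n)) : SimpleGraph (Fin (n + 1)) :=
  H.map Fin.castSuccEmb ⊔ fromEdgeSet ((fun d : Fin n => s(Fin.last n, d.castSucc)) '' S)

@[simp]
lemma addVertex_adj_castSucc : (addVertex H S).Adj x.castSucc y.castSucc ↔ H.Adj x y := by
  simpa [addVertex, map_adj', (Fin.castSucc_ne_last _).symm] using fun h => Adj.ne h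

@[simp]
lemma addVertex_adj_last_castSucc : (addVertex H S).Adj (Fin.last n) y.castSucc ↔ y ∈ S := by
  simp [addVertex, map_adj', (Fin.castSucc_ne_last _).symm]

lemma addVertex_ext {G G' : SimpleGraph (Fin (n + 1))}
    (h : ∀ x y : Fin n, G.Adj x.castSucc y.castSucc ↔ G'.Adj x.castSucc y.castSucc)
    (hl : ∀ y : Fin n, G.Adj (Fin.last n) y.castSucc ↔ G'.Adj (Fin.last n) y.castSucc) :
    G = G' := by
  ext u v
  induction u using Fin.lastCases <;> induction v using Fin.lastCases
  · simp
  · exact hl _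
  · rw [adj_comm, hl, adj_comm]
  · exact h _ _

lemma addVertex_sup_edge_castSucc :
    addVertex H S ⊔ edge x.castSucc y.castSucc = addVertex (H ⊔ edge x y) S := by
  refine addVertex_ext (fun u v => ?_) (fun v => ?_) <;>
    simp [edge_adj, (Fin.castSucc_ne_last _).symm]

lemma addVertex_sup_edge_last {u : Fin n} :
    addVertex H S ⊔ edge (Fin.last n) u.castSucc = addVertex H (insert u S) := by
  refine addVertex_ext (fun v w => ?_) (fun v => ?_) <;>
    simp [edge_adj, (Fin.castSucc_ne_last _).symm, or_comm]

lemma addVertex_top_univ : addVertex (⊤ : SimpleGraph (Fin n)) univ = ⊤ := by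
  refine addVertex_ext (fun v w => ?_) (fun v => ?_) <;> simp [(Fin.castSucc_ne_last _).symm]

lemma ncard_edgeSet_addVertex_le : (addVertex H S).edgeSet.ncard ≤ H.edgeSet.ncard + #S := by
  rw [addVertex, edgeSet_sup, edgeSet_map, edgeSet_fromEdgeSet]
  refine (Set.ncard_union_le _ _).trans (add_le_add ?_ ?_)
  · exact (Set.ncard_image_of_injective _ Fin.castSuccEmb.sym2Map.injective).le
  · calc _ ≤ ((fun d : Fin n => s(Fin.last n, d.castSucc)) '' (S : Set (Fin n))).ncard :=
          Set.ncard_le_ncard Set.sdiff_subset (Set.toFinite _)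
      _ ≤ #S := (Set.ncard_image_le (Set.toFinite _)).trans (Set.ncard_coe_finset S).le

end AddVertex

section Lift

variable {W : Type*} {F : SimpleGraph W} {n : ℕ} {H H' : SimpleGraph (Fin n)} {S : Finset (Fin n)}

lemma NewCopyStep.addVertex {x y : Fin n} (h : NewCopyStep F H x y) :
    NewCopyStep F (addVertex H S) x.castSucc y.castSucc := by
  obtain ⟨hxy, f, a, b, hab, rfl, rfl, hf⟩ := h
  refine ⟨by simpa using hxy, f.trans Fin.castSuccEmb, a, b, hab, rfl, rfl, fun c d hcd => ?_⟩
  simpa [addVertex_sup_edge_castSucc] using hf c d hcd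

lemma SatStep.addVertex (h : SatStep F H H') : SatStep F (addVertex H S) (addVertex H' S) := by
  obtain ⟨x, y, hxy, rfl⟩ := h
  exact ⟨_, _, hxy.addVertex, addVertex_sup_edge_castSucc.symm⟩

lemma reflTransGen_satStep_addVertex (h : ReflTransGen (SatStep F) H H') :
    ReflTransGen (SatStep F) (addVertex H S) (addVertex H' S) :=
  h.lift (addVertex · S) fun _ _ => SatStep.addVertex

lemma not_hasCopy_addVertex [Fintype W] [DecidableRel F.Adj] (hH : ¬ HasCopy F H)
    (hS : #S < F.minDegree) : ¬ HasCopy F (addVertex H S) := by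
  rintro ⟨f, hf⟩
  have hlast (a : W) : f a ≠ Fin.last n := by
    intro ha
    have hsub : (F.neighborFinset a).map f ⊆ S.map Fin.castSuccEmb := by
      intro v hv
      obtain ⟨b, hb, rfl⟩ := Finset.mem_map.1 hv
      have hab := hf a b ((F.mem_neighborFinset a b).1 hb)
      rw [ha] at hab
      induction hfb : f b using Fin.lastCases with
      | last => simp [hfb] at hab
      | cast d => rw [hfb] at hab; simpa using hab
    have := Finset.card_le_card hsub
    simp only [card_map, card_neighborFinset_eq_degree] at this
    exact (F.minDegree_le_degree a).not_gt (this.trans_lt hS)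
  refine hH ⟨⟨fun a => (f a).castPred (hlast a), fun a b hab => f.injective ?_⟩, fun a b hab => ?_⟩
  · simpa using congrArg Fin.castSucc hab
  · rw [← addVertex_adj_castSucc (S := S)]
    convert hf a b hab <;> exact Fin.castSucc_castPred _ (hlast _)
end Lift

lemma exists_embedding_mapsTo {α β : Type*} [Fintype α] [Fintype β] [DecidableEq β]
    {A : Finset α} {B : Finset β} (hAB : #A ≤ #B) (hαβ : Fintype.card α ≤ Fintype.card β) :
    ∃ g : α ↪ β, ∀ x ∈ A, g x ∈ B := by
  classical
  set t : α → Finset β := fun x => if x ∈ A then B else univ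
  have hall (s : Finset α) : #s ≤ #(s.biUnion t) := by
    by_cases hs : s ⊆ A
    · obtain rfl | ⟨x, hx⟩ := s.eq_empty_or_nonempty
      · simp
      calc #s ≤ #A := card_le_card hs
        _ ≤ #B := hAB
        _ ≤ _ := card_le_card (by simpa [t, hs hx] using subset_biUnion_of_mem t hx)
    · obtain ⟨x, hxs, hxA⟩ := not_subset.1 hs
      calc #s ≤ Fintype.card α := card_le_univ s
        _ ≤ #(univ : Finset β) := hαβ
        _ ≤ _ := card_le_card (by simpa [t, hxA] using subset_biUnion_of_mem t hxs)
  obtain ⟨g, hg, hgt⟩ := (all_card_le_biUnion_card_iff_exists_injective t).1 hall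
  exact ⟨⟨g, hg⟩, fun x hx => by simpa [t, hx] using hgt x⟩

lemma exists_embedding_neighborFinset_map_subset {W : Type*} [Fintype W] {F : SimpleGraph W}
    [DecidableRel F.Adj] {n : ℕ} {a : W} {B : Finset (Fin n)} (hB : F.degree a ≤ #B)
    (hn : Fintype.card W ≤ n + 1) :
    ∃ f : W ↪ Fin (n + 1), f a = Fin.last n ∧
      (F.neighborFinset a).map f ⊆ B.map Fin.castSuccEmb := by
  classical
  obtain ⟨g, hg⟩ := exists_embedding_mapsTo (A := (F.neighborFinset a).subtype (· ≠ a)) (B := B)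
    (by rw [card_subtype]; exact (card_filter_le _ _).trans hB)
    (by simp [Fintype.card_subtype_compl]; omega)
  refine ⟨(Equiv.optionSubtypeNe a).symm.toEmbedding.trans
    (g.optionMap.trans finSuccEquivLast.symm.toEmbedding), by simp, ?_⟩
  intro v hv
  obtain ⟨x, hx, rfl⟩ := mem_map.1 hv
  have hxa : x ≠ a := ((F.mem_neighborFinset a x).1 hx).ne'
  simpa [Equiv.optionSubtypeNe_symm_of_ne hxa] using hg ⟨x, hxa⟩ (by simpa using hx)

section Last

variable {W : Type*} [Fintype W] {F : SimpleGraph W} [DecidableRel F.Adj] {n : ℕ} {a : W}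
  {D S : Finset (Fin n)}

lemma newCopyStep_addVertex_top (hn : Fintype.card W ≤ n + 1) (ha : F.degree a = #D + 1)
    (hDS : D ⊆ S) {u : Fin n} (hu : u ∉ S) :
    NewCopyStep F (addVertex ⊤ S) (Fin.last n) u.castSucc := by
  have huD : u ∉ D := fun h => hu (hDS h)
  obtain ⟨f, hfa, hsub⟩ := exists_embedding_neighborFinset_map_subset (B := insert u D)
    (by rw [card_insert_of_notMem huD, ha]) hn
  -- `f` maps the `#D + 1` neighbours of `a` into `D ∪ {u}`, hence onto it: some neighbour hits `u`.
  have heq : (F.neighborFinset a).map f = (insert u D).map Fin.castSuccEmb :=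
    eq_of_subset_of_card_le hsub (by
      rw [card_map, card_map, card_neighborFinset_eq_degree, card_insert_of_notMem huD, ha])
  obtain ⟨b, hb, hfb⟩ := mem_map.1 (heq ▸ mem_map_of_mem _ (mem_insert_self u D))
  refine ⟨by simpa using hu, f, a, b, (F.mem_neighborFinset a b).1 hb, hfa, hfb, ?_⟩
  change ∀ c d, F.Adj c d → (addVertex ⊤ S ⊔ edge (Fin.last n) u.castSucc).Adj (f c) (f d)
  rw [addVertex_sup_edge_last]
  have hnbr (c d : W) (hcd : F.Adj c d) (hc : c = a) :
      (addVertex ⊤ (insert u S)).Adj (f c) (f d) := by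
    subst hc
    obtain ⟨e, he, hfe⟩ := mem_map.1 (hsub (mem_map_of_mem f ((F.mem_neighborFinset c d).2 hcd)))
    rw [hfa, ← hfe]
    simpa using mem_insert.1 he |>.imp_right (@hDS e)
  intro c d hcd
  by_cases hc : c = a
  · exact hnbr c d hcd hc
  by_cases hd : d = a
  · exact (hnbr d c hcd.symm hd).symm
  have hlast {x : W} (hx : x ≠ a) : f x ≠ Fin.last n := hfa ▸ f.injective.ne hx
  rw [← Fin.castSucc_castPred _ (hlast hc), ← Fin.castSucc_castPred _ (hlast hd),
    addVertex_adj_castSucc, top_adj, ne_eq, Fin.castPred_inj]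
  exact f.injective.ne hcd.ne

lemma reflTransGen_addVertex_top (hn : Fintype.card W ≤ n + 1) (ha : F.degree a = #D + 1)
    (hDS : D ⊆ S) : ReflTransGen (SatStep F) (addVertex ⊤ S) ⊤ := by
  suffices h : ∀ T S : Finset (Fin n), D ⊆ S →
      ReflTransGen (SatStep F) (addVertex ⊤ S) (addVertex ⊤ (S ∪ T)) by
    rw [← addVertex_top_univ, ← union_eq_right.2 (subset_univ S)]
    exact h univ S hDS
  intro T
  induction T using Finset.induction_on with
  | empty => exact fun S _ => by rw [union_empty]
  | insert u T _ ih =>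
    intro S hDS
    rw [union_insert]
    by_cases hu : u ∈ S
    · rw [insert_eq_of_mem (mem_union_left T hu)]
      exact ih S hDS
    · rw [← insert_union]
      exact .head ⟨_, _, newCopyStep_addVertex_top hn ha hDS hu, addVertex_sup_edge_last.symm⟩
        (ih _ (hDS.trans (subset_insert u S)))

end Last

section Wsat

variable {W : Type*} [Fintype W] {F : SimpleGraph W} [DecidableRel F.Adj] {n : ℕ}

lemma SimpleGraph.nonempty_of_minDegree_pos (h : 0 < F.minDegree) : Nonempty W := by
  by_contra hW
  rw [not_nonempty_iff] at hW
  simp at h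

lemma WeaklySaturated.addVertex {H : SimpleGraph (Fin n)} (hH : WeaklySaturated ⊤ F H)
    (hn : Fintype.card W ≤ n + 1) {D : Finset (Fin n)} (hD : #D + 1 = F.minDegree) :
    WeaklySaturated ⊤ F (addVertex H D) := by
  rw [weaklySaturated_iff] at hH ⊢
  obtain ⟨-, hcopy, hsat⟩ := hH
  have := nonempty_of_minDegree_pos (F := F) (by omega)
  obtain ⟨a, ha⟩ := F.exists_minimal_degree_vertex
  exact ⟨le_top, not_hasCopy_addVertex hcopy (by omega), (reflTransGen_satStep_addVertex hsat).trans
    (reflTransGen_addVertex_top hn (a := a) (by omega) subset_rfl)⟩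

lemma exists_weaklySaturated_succ (hδ : 1 ≤ F.minDegree) (hn : Fintype.card W ≤ n + 1)
    {H : SimpleGraph (Fin n)} (hH : WeaklySaturated ⊤ F H) :
    ∃ H' : SimpleGraph (Fin (n + 1)), WeaklySaturated ⊤ F H' ∧
      H'.edgeSet.ncard ≤ H.edgeSet.ncard + (F.minDegree - 1) := by
  have := nonempty_of_minDegree_pos hδ
  obtain ⟨D, -, hD⟩ := exists_subset_card_eq (s := (univ : Finset (Fin n)))
    (n := F.minDegree - 1) (by rw [card_univ, Fintype.card_fin]; have := F.minDegree_lt_card; omega)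
  exact ⟨_, hH.addVertex hn (by omega), hD ▸ ncard_edgeSet_addVertex_le⟩

lemma exists_weaklySaturated (hδ : 1 ≤ F.minDegree) (hn : Fintype.card W - 1 ≤ n) :
    ∃ H : SimpleGraph (Fin n), WeaklySaturated ⊤ F H := by
  have := nonempty_of_minDegree_pos hδ
  induction n, hn using Nat.le_induction with
  | base =>
    refine ⟨⊤, weaklySaturated_iff.2 ⟨le_rfl, fun ⟨f, _⟩ => ?_, .refl⟩⟩
    have := Fintype.card_le_of_embedding f
    simp only [Fintype.card_fin] at this
    have := Fintype.card_pos (α := W)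
    omega
  | succ n hn ih =>
    obtain ⟨H, hH⟩ := ih
    obtain ⟨H', hH', -⟩ := exists_weaklySaturated_succ hδ (by omega) hH
    exact ⟨H', hH'⟩

lemma wsat_succ_le (hδ : 1 ≤ F.minDegree) (hn : Fintype.card W - 1 ≤ n) :
    wsat (⊤ : SimpleGraph (Fin (n + 1))) F ≤
      wsat (⊤ : SimpleGraph (Fin n)) F + (F.minDegree - 1) := by
  obtain ⟨H, hH⟩ := exists_weaklySaturated hδ hn
  obtain ⟨H₀, hH₀, hcard⟩ : wsat (⊤ : SimpleGraph (Fin n)) F ∈ _ := Nat.sInf_mem ⟨_, H, hH, rfl⟩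
  obtain ⟨H', hH', hle⟩ := exists_weaklySaturated_succ hδ (by omega) hH₀
  calc wsat (⊤ : SimpleGraph (Fin (n + 1))) F ≤ H'.edgeSet.ncard := Nat.sInf_le ⟨H', hH', rfl⟩
    _ ≤ _ := hcard ▸ hle

end Wsat

/-- for a graph `F` with `s` vertices and minimum degree `δ ≥ 1`,
for all `n ≥ m ≥ s - 1`, `wsat(K_n, F) ≤ (δ-1)(n-m) + wsat(K_m, F)`. -/
theorem stmt2 {s n m : ℕ} (F : SimpleGraph (Fin s)) [DecidableRel F.Adj]
    (hδ : 1 ≤ F.minDegree) (hm : s - 1 ≤ m) (hn : m ≤ n) :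
    wsat (⊤ : SimpleGraph (Fin n)) F ≤
      (F.minDegree - 1) * (n - m) + wsat (⊤ : SimpleGraph (Fin m)) F := by
  induction n, hn using Nat.le_induction with
  | base => simp
  | succ n hmn ih =>
    have hstep := wsat_succ_le (F := F) hδ (by simpa using hm.trans hmn)
    rw [Nat.sub_add_comm hmn, mul_add_one]
    omega
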